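/- arXiv:1506.01925 — 5 statements merged into one kernel-verified Lean document; each statement's English description precedes it below -/
import Mathlib

section
/- Let k be a field of characteristic different from 2 and 3 containing a primitive third root of unity, and let F = k(x_1, x_2, x_3, x_4) be the field of rational functions in four variables over k. Suppose E is a field extension of F and t_2, t_3, t_4 ∈ E satisfy t_i^6 = x_i^2(x_i - 1) / (x_1^2(x_1 - 1)) for i = 2, 3, 4. Then the intermediate field F(t_2, t_3, t_4) has degree exactly 216 = 6^3 over F. -/
/-!
Adjoin the roots one at a time. When `tᵢ` is adjoined, it suffices that
`aᵢ = xᵢ²(xᵢ - 1) / (x₁²(x₁ - 1))` is neither a square nor a cube in the field `L` built so far: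
then `X² - aᵢ` and `X³ - aᵢ` are irreducible over `L`, so `2` and `3` both divide
`[L(tᵢ) : L] ≤ 6`.

To see that `aᵢ` is not a proper power in `L`, specialize: send `xᵢ` to the variable `X` of
`Ω(X)`, with `Ω` algebraically closed, and the other variables to constants in `Ω`. The `aⱼ`
with `j ≠ i` become constants, whose sixth roots lie in `Ω ⊆ Ω(X)`, so the specialization extends
to `L`. Meanwhile `aᵢ` becomes `e X²(X - 1)` with `e ≠ 0`. Since `Ω[X]` is integrally closed, a
`d`-th root of this in `Ω(X)` would be a polynomial, which is impossible for `d ≥ 2` because of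
the simple root at `1`.
-/

open Polynomial IntermediateField Module

theorem IsIntegrallyClosed.pow_ne_algebraMap_of_prime {R K : Type*} [CommRing R] [IsDomain R]
    [IsIntegrallyClosed R] [Field K] [Algebra R K] [IsFractionRing R K] {π p : R}
    (hπ : Prime π) (hπp : π ∣ p) (hπ2p : ¬ π ^ 2 ∣ p) {d : ℕ} (hd : 2 ≤ d) (f : K) :
    f ^ d ≠ algebraMap R K p := by
  intro h
  obtain ⟨g, rfl⟩ := IsIntegrallyClosed.exists_algebraMap_eq_of_isIntegral_pow (R := R)
    (by omega : 0 < d) (h ▸ isIntegral_algebraMap)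
  rw [← map_pow] at h
  obtain rfl := IsFractionRing.injective R K h
  exact hπ2p ((pow_dvd_pow_of_dvd (hπ.dvd_of_dvd_pow hπp) 2).trans (pow_dvd_pow g hd))

theorem RatFunc.pow_ne_C_mul_X_sq_mul_X_sub_one {K : Type*} [Field K] {e : K} (he : e ≠ 0)
    {d : ℕ} (hd : 2 ≤ d) (f : RatFunc K) :
    f ^ d ≠ RatFunc.C e * RatFunc.X ^ 2 * (RatFunc.X - 1) := by
  have hsq : ¬ (Polynomial.X - Polynomial.C (1 : K)) ^ 2 ∣
      Polynomial.C e * Polynomial.X ^ 2 * (Polynomial.X - Polynomial.C 1) := by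
    rw [pow_two, mul_dvd_mul_iff_right (X_sub_C_ne_zero (1 : K)), dvd_iff_isRoot]
    simpa using he
  simpa using IsIntegrallyClosed.pow_ne_algebraMap_of_prime (prime_X_sub_C (1 : K))
    (dvd_mul_left _ _) hsq hd f

theorem minpoly.eq_X_pow_sub_C_of_irreducible {K E : Type*} [Field K] [Field E] [Algebra K E]
    {n : ℕ} {a : K} (hirr : Irreducible (X ^ n - C a)) {s : E}
    (hs : s ^ n = algebraMap K E a) : minpoly K s = X ^ n - C a :=
  (minpoly.eq_of_irreducible_of_monic hirr (x := s) (by simp [hs])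
    (monic_X_pow_sub_C a (ne_zero_of_irreducible_X_pow_sub_C hirr))).symm

namespace IntermediateField

variable {F E : Type*} [Field F] [Field E] [Algebra F E]

theorem finrank_adjoin_simple_of_irreducible_X_pow_sub_C {n : ℕ} {a : F}
    (hirr : Irreducible (X ^ n - C a)) {s : E} (hs : s ^ n = algebraMap F E a) :
    finrank F F⟮s⟯ = n := by
  have hint : IsIntegral F s := IsIntegral.of_pow
    (Nat.pos_of_ne_zero (ne_zero_of_irreducible_X_pow_sub_C hirr)) (hs ▸ isIntegral_algebraMap)
  rw [adjoin.finrank hint, minpoly.eq_X_pow_sub_C_of_irreducible hirr hs, natDegree_X_pow_sub_C]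

theorem finrank_adjoin_simple_of_pow_mul_eq {m n : ℕ} (hmn : m.Coprime n) {a : F}
    (hm : Irreducible (X ^ m - C a)) (hn : Irreducible (X ^ n - C a)) {t : E}
    (ht : t ^ (m * n) = algebraMap F E a) : finrank F F⟮t⟯ = m * n := by
  have hmn0 : 0 < m * n := Nat.pos_of_ne_zero <|
    mul_ne_zero (ne_zero_of_irreducible_X_pow_sub_C hm) (ne_zero_of_irreducible_X_pow_sub_C hn)
  have hint : IsIntegral F t := IsIntegral.of_pow hmn0 (ht ▸ isIntegral_algebraMap)
  have := adjoin.finiteDimensional hint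
  have hle : finrank F F⟮t⟯ ≤ m * n := by
    have hroot : aeval t (X ^ (m * n) - C a) = 0 := by simp [ht]
    rw [adjoin.finrank hint]
    simpa [natDegree_X_pow_sub_C] using
      natDegree_le_of_dvd (minpoly.dvd F t hroot) (X_pow_sub_C_ne_zero hmn0 a)
  have hdvd : ∀ s ∈ F⟮t⟯, finrank F F⟮s⟯ ∣ finrank F F⟮t⟯ := fun s hs =>
    Dvd.intro _ (finrank_bot_mul_relfinrank (adjoin_simple_le_iff.mpr hs))
  have hm_dvd := hdvd (t ^ n) (pow_mem (mem_adjoin_simple_self F t) n)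
  have hn_dvd := hdvd (t ^ m) (pow_mem (mem_adjoin_simple_self F t) m)
  rw [finrank_adjoin_simple_of_irreducible_X_pow_sub_C hm (by rw [← pow_mul, mul_comm, ht])]
    at hm_dvd
  rw [finrank_adjoin_simple_of_irreducible_X_pow_sub_C hn (by rw [← pow_mul, ht])] at hn_dvd
  exact le_antisymm hle (Nat.le_of_dvd finrank_pos (hmn.mul_dvd_of_dvd_of_dvd hm_dvd hn_dvd))

theorem finrank_adjoin_insert (S : Set E) (t : E) :
    finrank F (adjoin F (insert t S)) =
      finrank F (adjoin F S) * finrank (adjoin F S) (adjoin (adjoin F S) {t}) := by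
  have h : adjoin F S ≤ adjoin F (insert t S) := adjoin.mono F _ _ (Set.subset_insert t S)
  have hext : extendScalars h = adjoin (adjoin F S) {t} := restrictScalars_injective F <| by
    rw [extendScalars_restrictScalars, adjoin_adjoin_left, Set.union_singleton]
  rw [← finrank_bot_mul_relfinrank h, relfinrank_eq_finrank_of_le h, hext]

theorem finrank_adjoin_insert_of_pow_six_eq {S : Set E} {t : E} {a : F}
    (ht : t ^ 6 = algebraMap F E a) (hsq : ∀ s : adjoin F S, s ^ 2 ≠ algebraMap F _ a)
    (hcube : ∀ s : adjoin F S, s ^ 3 ≠ algebraMap F _ a) :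
    finrank F (adjoin F (insert t S)) = finrank F (adjoin F S) * 6 := by
  rw [finrank_adjoin_insert, finrank_adjoin_simple_of_pow_mul_eq (m := 2) (n := 3) (by norm_num)
    (X_pow_sub_C_irreducible_of_prime Nat.prime_two hsq)
    (X_pow_sub_C_irreducible_of_prime Nat.prime_three hcube)
    (by rwa [← IsScalarTower.algebraMap_apply])]

theorem nonempty_algHom_adjoin_of_pow_eq {K : Type*} [Field K] [Algebra F K] {S : Set E}
    {n : ℕ} (hn : n ≠ 0)
    (hS : ∀ s ∈ S, ∃ b : F, s ^ n = algebraMap F E b ∧ (X ^ n - C (algebraMap F K b)).Splits) :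
    Nonempty (adjoin F S →ₐ[F] K) := by
  refine nonempty_algHom_adjoin_of_splits fun s hs => ?_
  obtain ⟨b, hsb, hsplit⟩ := hS s hs
  have hroot : aeval s (X ^ n - C b) = 0 := by simp [hsb]
  refine ⟨⟨_, monic_X_pow_sub_C b hn, by simpa [aeval_def] using hroot⟩, hsplit.of_dvd ?_ ?_⟩
  · exact X_pow_sub_C_ne_zero (Nat.pos_of_ne_zero hn) _
  · simpa [Polynomial.map_sub] using Polynomial.map_dvd (algebraMap F K) (minpoly.dvd F s hroot)

end IntermediateField

namespace MvPolynomial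

variable {σ k : Type*} [Field k]

theorem exists_ringHom_fractionRing_ratFunc (i : σ) :
    ∃ φ : FractionRing (MvPolynomial σ k) →+*
        RatFunc (AlgebraicClosure (FractionRing (MvPolynomial σ k))),
      φ (algebraMap (MvPolynomial σ k) _ (X i)) = RatFunc.X ∧
        ∀ j ≠ i, ∃ c, φ (algebraMap (MvPolynomial σ k) _ (X j)) = RatFunc.C c := by
  classical
  set Ω := AlgebraicClosure (FractionRing (MvPolynomial σ k))
  let ι : MvPolynomial {j // j ≠ i} k →+* Ω :=
    (algebraMap (FractionRing (MvPolynomial σ k)) Ω).comp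
      ((algebraMap (MvPolynomial σ k) _).comp (rename Subtype.val).toRingHom)
  have hι : Function.Injective ι := by
    simp only [ι, RingHom.coe_comp]
    exact (FaithfulSMul.algebraMap_injective _ Ω).comp <| (IsFractionRing.injective _ _).comp <|
      rename_injective _ Subtype.val_injective
  -- `k[xⱼ : j ∈ σ] ≃ k[xⱼ : j ≠ i][xᵢ]`, then `xⱼ ↦ xⱼ ∈ Ω` on the coefficients
  let e := (renameEquiv k (Equiv.optionSubtypeNe i).symm).trans (optionEquivLeft k {j // j ≠ i})
  let g : MvPolynomial σ k →+* RatFunc Ω :=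
    (algebraMap (Polynomial Ω) (RatFunc Ω)).comp <| (mapRingHom ι).comp e.toRingHom
  have hg : Function.Injective g :=
    (RatFunc.algebraMap_injective Ω).comp <| (Polynomial.map_injective ι hι).comp e.injective
  refine ⟨IsFractionRing.lift hg, ?_, fun j hj => ⟨ι (X ⟨j, hj⟩), ?_⟩⟩
  · simp [g, e, optionEquivLeft_X_none]
  · simp [g, e, optionEquivLeft_X_some, hj]

variable (k) in
noncomputable def cubicRatio (o j : σ) : FractionRing (MvPolynomial σ k) :=
  let x i := algebraMap (MvPolynomial σ k) (FractionRing (MvPolynomial σ k)) (X i)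
  x j ^ 2 * (x j - 1) / (x o ^ 2 * (x o - 1))

theorem algebraMap_X_sq_mul_X_sub_one_ne_zero (o : σ) :
    algebraMap (MvPolynomial σ k) (FractionRing (MvPolynomial σ k)) (X o) ^ 2 *
      (algebraMap (MvPolynomial σ k) _ (X o) - 1) ≠ 0 := by
  have hX1 : (X o - 1 : MvPolynomial σ k) ≠ 0 := fun h => by simpa using congrArg (eval 0) h
  simpa using (IsFractionRing.injective (MvPolynomial σ k) (FractionRing (MvPolynomial σ k))).ne
    (mul_ne_zero (pow_ne_zero 2 (X_ne_zero o)) hX1)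

theorem pow_ne_cubicRatio_of_mem_adjoin {E : Type*} [Field E]
    [Algebra (FractionRing (MvPolynomial σ k)) E] {o i : σ} (hoi : o ≠ i) {S : Set E} {n : ℕ}
    (hn : n ≠ 0) (hS : ∀ s ∈ S, ∃ j ≠ i, s ^ n = algebraMap _ E (cubicRatio k o j))
    {d : ℕ} (hd : 2 ≤ d) (s : adjoin (FractionRing (MvPolynomial σ k)) S) :
    s ^ d ≠ algebraMap _ _ (cubicRatio k o i) := by
  obtain ⟨φ, hφi, hφ⟩ := exists_ringHom_fractionRing_ratFunc (k := k) i
  obtain ⟨c, hc⟩ := hφ o hoi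
  let _ := φ.toAlgebra
  obtain ⟨ψ⟩ := nonempty_algHom_adjoin_of_pow_eq
    (K := RatFunc (AlgebraicClosure (FractionRing (MvPolynomial σ k)))) hn fun s hs => by
    obtain ⟨j, hj, hsj⟩ := hS s hs
    obtain ⟨c', hc'⟩ := hφ j hj
    refine ⟨_, hsj, ?_⟩
    have hsplit := (IsAlgClosed.splits
      (Polynomial.X ^ n - Polynomial.C (c' ^ 2 * (c' - 1) / (c ^ 2 * (c - 1))))).map RatFunc.C
    simpa [Polynomial.map_sub, RingHom.algebraMap_toAlgebra, cubicRatio, hc, hc'] using hsplit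
  have hden : φ (algebraMap (MvPolynomial σ k) _ (X o) ^ 2 *
      (algebraMap (MvPolynomial σ k) _ (X o) - 1)) = RatFunc.C (c ^ 2 * (c - 1)) := by
    simp [hc]
  have hc0 : c ^ 2 * (c - 1) ≠ 0 := fun h0 => algebraMap_X_sq_mul_X_sub_one_ne_zero o <|
    φ.injective (by rw [hden, h0, map_zero, map_zero])
  intro h
  apply RatFunc.pow_ne_C_mul_X_sq_mul_X_sub_one (inv_ne_zero hc0) hd (ψ s)
  rw [← map_pow, h, AlgHom.commutes, RingHom.algebraMap_toAlgebra]
  simp [cubicRatio, hc, hφi]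
  field_simp

end MvPolynomial

theorem stmt_0_general (k : Type*) [Field k]
    (E : Type*) [Field E] [Algebra (FractionRing (MvPolynomial (Fin 4) k)) E]
    (x : Fin 4 → FractionRing (MvPolynomial (Fin 4) k))
    (hx : ∀ i, x i = algebraMap (MvPolynomial (Fin 4) k)
      (FractionRing (MvPolynomial (Fin 4) k)) (MvPolynomial.X i))
    (t₂ t₃ t₄ : E)
    (ht₂ : t₂ ^ 6 = algebraMap (FractionRing (MvPolynomial (Fin 4) k)) E
      ((x 1) ^ 2 * (x 1 - 1) / ((x 0) ^ 2 * (x 0 - 1))))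
    (ht₃ : t₃ ^ 6 = algebraMap (FractionRing (MvPolynomial (Fin 4) k)) E
      ((x 2) ^ 2 * (x 2 - 1) / ((x 0) ^ 2 * (x 0 - 1))))
    (ht₄ : t₄ ^ 6 = algebraMap (FractionRing (MvPolynomial (Fin 4) k)) E
      ((x 3) ^ 2 * (x 3 - 1) / ((x 0) ^ 2 * (x 0 - 1)))) :
    Module.finrank (FractionRing (MvPolynomial (Fin 4) k))
      (IntermediateField.adjoin (FractionRing (MvPolynomial (Fin 4) k))
        {t₂, t₃, t₄} : IntermediateField (FractionRing (MvPolynomial (Fin 4) k)) E) = 216 := by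
  obtain rfl : x = fun i => algebraMap _ _ (MvPolynomial.X i) := funext hx
  have step : ∀ (i : Fin 4) (t : E) (S : Set E), i ≠ 0 →
      t ^ 6 = algebraMap _ E (MvPolynomial.cubicRatio k 0 i) →
      (∀ s ∈ S, ∃ j ≠ i, s ^ 6 = algebraMap _ E (MvPolynomial.cubicRatio k 0 j)) →
      finrank _ (adjoin _ (insert t S)) = finrank _ (adjoin _ S) * 6 :=
    fun i t S hi ht hS => finrank_adjoin_insert_of_pow_six_eq ht
      (MvPolynomial.pow_ne_cubicRatio_of_mem_adjoin hi.symm (by norm_num) hS le_rfl)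
      (MvPolynomial.pow_ne_cubicRatio_of_mem_adjoin hi.symm (by norm_num) hS (by norm_num))
  rw [step 1 t₂ _ (by decide) ht₂ ?_, step 2 t₃ _ (by decide) ht₃ ?_, ← insert_empty_eq,
    step 3 t₄ ∅ (by decide) ht₄ (by simp), adjoin_empty, IntermediateField.finrank_bot]
  · simp only [Set.mem_singleton_iff, forall_eq]
    exact ⟨3, by decide, ht₄⟩
  · simp only [Set.mem_insert_iff, Set.mem_singleton_iff, forall_eq_or_imp, forall_eq]
    exact ⟨⟨2, by decide, ht₃⟩, ⟨3, by decide, ht₄⟩⟩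

/-- Let `k` be a field of characteristic different from 2 and 3 containing a
primitive third root of unity, and let `F = k(x₁, x₂, x₃, x₄)` be the field of rational
functions in four variables over `k`. Suppose `E` is a field extension of `F` and
`t₂, t₃, t₄ ∈ E` satisfy `tᵢ⁶ = xᵢ²(xᵢ - 1) / (x₁²(x₁ - 1))` for `i = 2, 3, 4`. Then
`F(t₂, t₃, t₄)` has degree exactly `216 = 6³` over `F`. -/
theorem stmt_0 (k : Type*) [Field k] (h2 : (2 : k) ≠ 0) (h3 : (3 : k) ≠ 0)
    (ω : k) (hω : IsPrimitiveRoot ω 3)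
    (E : Type*) [Field E] [Algebra (FractionRing (MvPolynomial (Fin 4) k)) E]
    (x : Fin 4 → FractionRing (MvPolynomial (Fin 4) k))
    (hx : ∀ i, x i = algebraMap (MvPolynomial (Fin 4) k)
      (FractionRing (MvPolynomial (Fin 4) k)) (MvPolynomial.X i))
    (t₂ t₃ t₄ : E)
    (ht₂ : t₂ ^ 6 = algebraMap (FractionRing (MvPolynomial (Fin 4) k)) E
      ((x 1) ^ 2 * (x 1 - 1) / ((x 0) ^ 2 * (x 0 - 1))))
    (ht₃ : t₃ ^ 6 = algebraMap (FractionRing (MvPolynomial (Fin 4) k)) E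
      ((x 2) ^ 2 * (x 2 - 1) / ((x 0) ^ 2 * (x 0 - 1))))
    (ht₄ : t₄ ^ 6 = algebraMap (FractionRing (MvPolynomial (Fin 4) k)) E
      ((x 3) ^ 2 * (x 3 - 1) / ((x 0) ^ 2 * (x 0 - 1)))) :
    Module.finrank (FractionRing (MvPolynomial (Fin 4) k))
      (IntermediateField.adjoin (FractionRing (MvPolynomial (Fin 4) k))
        {t₂, t₃, t₄} : IntermediateField (FractionRing (MvPolynomial (Fin 4) k)) E) = 216 :=
  stmt_0_general k E x hx t₂ t₃ t₄ ht₂ ht₃ ht₄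
end

section
/- Let k be a field of characteristic different from 2 and 3, and let F = k(x_1, x_2, x_3, x_4) be the field of rational functions in four variables over k. Set c_i = x_i^2(x_i - 1) / (x_1^2(x_1 - 1)) ∈ F for i = 2, 3, 4. If m_2, m_3, m_4 are natural numbers such that c_2^{m_2} · c_3^{m_3} · c_4^{m_4} = f^6 for some f ∈ F, then 6 divides each of m_2, m_3, m_4. -/
/-!
With `N i = X i ^ 2 * (X i - 1)` we have `c i = N i / N 0`, so clearing denominators in
`c 1 ^ m₂ * c 2 ^ m₃ * c 3 ^ m₄ = (a / b) ^ 6` gives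
`N 1 ^ m₂ * N 2 ^ m₃ * N 3 ^ m₄ * b ^ 6 = a ^ 6 * N 0 ^ (m₂ + m₃ + m₄)` in the polynomial ring.
For `i ≠ 0` the prime `X i - 1` divides `N i` exactly once and divides no other `N j`, so its
multiplicity `v` on the two sides reads `m + 6 v(b) = 6 v(a)`, where `m` is the exponent of
`c i`.
-/

open MvPolynomial

namespace MvPolynomial

variable {σ R : Type*} [CommRing R]

theorem prime_X_sub_C [IsDomain R] (i : σ) (a : R) : Prime (X i - C a : MvPolynomial σ R) := by
  classical
  let e : MvPolynomial σ R ≃ₐ[R] MvPolynomial σ R :=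
    AlgEquiv.ofAlgHom (aeval (Function.update X i (X i - C a)))
      (aeval (Function.update X i (X i + C a)))
      (algHom_ext fun j => by by_cases h : j = i <;> simp [h])
      (algHom_ext fun j => by by_cases h : j = i <;> simp [h])
  have he : e (X i) = X i - C a := by simp [e]
  rw [← he, MulEquiv.prime_iff]
  exact X_prime

theorem prime_X_sub_one [IsDomain R] (i : σ) : Prime (X i - 1 : MvPolynomial σ R) := by
  simpa using prime_X_sub_C (R := R) i 1

theorem aeval_update_eq_zero_of_X_sub_C_dvd [DecidableEq σ] {i : σ} {a : R}
    {p : MvPolynomial σ R} (h : X i - C a ∣ p) : aeval (Function.update X i (C a)) p = 0 := by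
  obtain ⟨q, rfl⟩ := h
  simp

theorem emultiplicity_X_sub_one_X_sq_mul_X_sub_one [DecidableEq σ] [IsDomain R] (i j : σ) :
    emultiplicity (X i - 1 : MvPolynomial σ R) (X j ^ 2 * (X j - 1)) =
      if j = i then 1 else 0 := by
  have hπ : Prime (X i - 1 : MvPolynomial σ R) := prime_X_sub_one i
  have not_dvd {p : MvPolynomial σ R} (hp : aeval (Function.update X i (C 1)) p ≠ 0) :
      ¬ X i - 1 ∣ p := fun h => hp (aeval_update_eq_zero_of_X_sub_C_dvd (by rwa [C_1]))
  split_ifs with hji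
  · subst hji
    have hself := emultiplicity_pow_self_of_prime hπ 1
    rw [pow_one] at hself
    rw [emultiplicity_mul hπ, emultiplicity_pow hπ, emultiplicity_eq_zero.2 (not_dvd (by simp)),
      hself]
    simp
  · refine emultiplicity_eq_zero.2 (not_dvd ?_)
    simp only [map_mul, map_pow, map_sub, map_one, aeval_X, Function.update_of_ne hji]
    exact mul_ne_zero (pow_ne_zero _ (X_ne_zero j)) (prime_X_sub_one j).ne_zero

end MvPolynomial

theorem dvd_of_emultiplicity_eq_of_mul_pow_eq_pow_mul {A : Type*} [CommMonoidWithZero A]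
    [IsCancelMulZero A] [WfDvdMonoid A] {π u d a b : A} {m n : ℕ} (hπ : Prime π)
    (hu : emultiplicity π u = m) (hd : ¬ π ∣ d) (hn : n ≠ 0) (hb : b ≠ 0)
    (h : u * b ^ n = a ^ n * d) : n ∣ m := by
  have ha : a ≠ 0 := by
    rintro rfl
    have hu0 : u = 0 := by simpa [zero_pow hn, hb, hn] using h
    simp [hu0] at hu
  have hfin {x : A} (hx : x ≠ 0) : FiniteMultiplicity π x :=
    FiniteMultiplicity.of_not_isUnit hπ.not_isUnit hx
  have H := congrArg (emultiplicity π) h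
  rw [emultiplicity_mul hπ, emultiplicity_mul hπ, emultiplicity_pow hπ, emultiplicity_pow hπ, hu,
    emultiplicity_eq_zero.2 hd, (hfin ha).emultiplicity_eq_multiplicity,
    (hfin hb).emultiplicity_eq_multiplicity] at H
  have H' : m + n * multiplicity π b = n * multiplicity π a := by exact_mod_cast H
  exact (Nat.dvd_add_left (dvd_mul_right n _)).1 (H' ▸ dvd_mul_right n _)

theorem exists_mul_pow_eq_pow_mul_of_div_eq_pow {A K : Type*} [CommRing A] [IsDomain A]
    [Field K] [Algebra A K] [IsFractionRing A K] {u d : A} (hd : d ≠ 0) {n : ℕ} {f : K}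
    (h : algebraMap A K u / algebraMap A K d = f ^ n) :
    ∃ a b : A, b ≠ 0 ∧ u * b ^ n = a ^ n * d := by
  obtain ⟨a, b, hb, rfl⟩ := IsFractionRing.div_surjective (A := A) f
  have hb0 := nonZeroDivisors.ne_zero hb
  refine ⟨a, b, hb0, IsFractionRing.injective A K ?_⟩
  rw [div_pow, div_eq_div_iff (by simpa using hd) (pow_ne_zero n (by simpa using hb0))] at h
  simpa [map_mul, map_pow] using h

theorem stmt_1_general (k : Type*) [Field k]
    (x : Fin 4 → FractionRing (MvPolynomial (Fin 4) k))
    (hx : ∀ i, x i = algebraMap (MvPolynomial (Fin 4) k)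
      (FractionRing (MvPolynomial (Fin 4) k)) (MvPolynomial.X i))
    (c : Fin 4 → FractionRing (MvPolynomial (Fin 4) k))
    (hc : ∀ i, c i = (x i) ^ 2 * (x i - 1) / ((x 0) ^ 2 * (x 0 - 1)))
    (m₂ m₃ m₄ : ℕ) (f : FractionRing (MvPolynomial (Fin 4) k))
    (hf : (c 1) ^ m₂ * (c 2) ^ m₃ * (c 3) ^ m₄ = f ^ 6) :
    6 ∣ m₂ ∧ 6 ∣ m₃ ∧ 6 ∣ m₄ := by
  let N (i : Fin 4) : MvPolynomial (Fin 4) k := X i ^ 2 * (X i - 1)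
  let ι := algebraMap (MvPolynomial (Fin 4) k) (FractionRing (MvPolynomial (Fin 4) k))
  have hπ (i : Fin 4) : Prime (X i - 1 : MvPolynomial (Fin 4) k) := prime_X_sub_one i
  have hN0 : N 0 ≠ 0 := mul_ne_zero (pow_ne_zero _ (X_ne_zero 0)) (hπ 0).ne_zero
  have hcN (i : Fin 4) : c i = ι (N i) / ι (N 0) := by simp [ι, N, hc, hx]
  have hf' : ι (N 1 ^ m₂ * N 2 ^ m₃ * N 3 ^ m₄) / ι (N 0 ^ (m₂ + m₃ + m₄)) = f ^ 6 := by
    rw [← hf, hcN, hcN, hcN]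
    simp only [map_mul, map_pow]
    ring
  obtain ⟨a, b, hb, h⟩ := exists_mul_pow_eq_pow_mul_of_div_eq_pow (pow_ne_zero _ hN0) hf'
  have key (i : Fin 4) (hi : i ≠ 0) (m : ℕ)
      (hm : emultiplicity (X i - 1) (N 1 ^ m₂ * N 2 ^ m₃ * N 3 ^ m₄) = m) : 6 ∣ m := by
    refine dvd_of_emultiplicity_eq_of_mul_pow_eq_pow_mul (hπ i) hm ?_ (by norm_num) hb h
    rw [← emultiplicity_eq_zero, emultiplicity_pow (hπ i),
      emultiplicity_X_sub_one_X_sq_mul_X_sub_one, if_neg hi.symm, mul_zero]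
  refine ⟨key 1 (by decide) m₂ ?_, key 2 (by decide) m₃ ?_, key 3 (by decide) m₄ ?_⟩ <;>
    simp only [emultiplicity_mul (hπ _), emultiplicity_pow (hπ _)] <;>
    simp [N, emultiplicity_X_sub_one_X_sq_mul_X_sub_one]

/-- Let `k` be a field of characteristic different from 2 and 3, and let
`F = k(x₁, x₂, x₃, x₄)` be the field of rational functions in four variables over `k`.
Set `cᵢ = xᵢ²(xᵢ - 1) / (x₁²(x₁ - 1)) ∈ F` for `i = 2, 3, 4`. If `m₂, m₃, m₄` are natural
numbers such that `c₂^m₂ · c₃^m₃ · c₄^m₄ = f⁶` for some `f ∈ F`, then `6` divides each of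
`m₂, m₃, m₄`. -/
theorem stmt_1 (k : Type*) [Field k] (h2 : (2 : k) ≠ 0) (h3 : (3 : k) ≠ 0)
    (x : Fin 4 → FractionRing (MvPolynomial (Fin 4) k))
    (hx : ∀ i, x i = algebraMap (MvPolynomial (Fin 4) k)
      (FractionRing (MvPolynomial (Fin 4) k)) (MvPolynomial.X i))
    (c : Fin 4 → FractionRing (MvPolynomial (Fin 4) k))
    (hc : ∀ i, c i = (x i) ^ 2 * (x i - 1) / ((x 0) ^ 2 * (x 0 - 1)))
    (m₂ m₃ m₄ : ℕ) (f : FractionRing (MvPolynomial (Fin 4) k))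
    (hf : (c 1) ^ m₂ * (c 2) ^ m₃ * (c 3) ^ m₄ = f ^ 6) :
    6 ∣ m₂ ∧ 6 ∣ m₃ ∧ 6 ∣ m₄ :=
  stmt_1_general k x hx c hc m₂ m₃ m₄ f hf
end

section
/- Let F be a field of characteristic different from 2, and let s_3, s_4, w_2, w_3, w_4 ∈ F with w_2^3 ≠ 1, s_3^2(w_2^3 - 1) ≠ w_3^3 - 1, and s_4^2(w_2^3 - 1) ≠ w_4^3 - 1. Suppose (s_3 - s_4) s_3 s_4 (w_2^3 - 1) - (s_3 - 1) s_3 (w_4^3 - 1) + (s_4 - 1) s_4 (w_3^3 - 1) = 0. Then the element v_2 := 1 + 2(-s_3(w_2^3 - 1) + (w_3^3 - 1)) / (s_3^2(w_2^3 - 1) - (w_3^3 - 1)) satisfies, with v_i := s_i(v_2 - 1) + 1, the equations (v_i^2 - 1)(w_2^3 - 1) = (v_2^2 - 1)(w_i^3 - 1) for both i = 3 and i = 4. -/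
/-!
Put `k = v₂ - 1`, `a = w₂³ - 1` and `bᵢ = wᵢ³ - 1`. Since `vᵢ² - 1 = sᵢk(sᵢk + 2)`, the equation
for `vᵢ` is `k` times the linear equation `k(sᵢ²a - bᵢ) = 2(bᵢ - sᵢa)`. The choice of `v₂` solves
it for `i = 3`, and the cross-multiplied difference of the two linear equations is `a` times the
assumed relation, so the same `k` solves it for `i = 4`.
-/

theorem sq_sub_one_mul_eq_of_linear {R : Type*} [CommRing R] {s a b v : R}
    (h : (v - 1) * (s ^ 2 * a - b) = 2 * (b - s * a)) :
    ((s * (v - 1) + 1) ^ 2 - 1) * a = (v ^ 2 - 1) * b := by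
  linear_combination (v - 1) * h

theorem linear_of_linear_of_rel {R : Type*} [CommRing R] [IsDomain R] {k s₃ s₄ a b₃ b₄ : R}
    (hd : s₃ ^ 2 * a - b₃ ≠ 0)
    (hrel : (s₃ - s₄) * s₃ * s₄ * a - (s₃ - 1) * s₃ * b₄ + (s₄ - 1) * s₄ * b₃ = 0)
    (h₃ : k * (s₃ ^ 2 * a - b₃) = 2 * (b₃ - s₃ * a)) :
    k * (s₄ ^ 2 * a - b₄) = 2 * (b₄ - s₄ * a) := by
  refine mul_right_cancel₀ hd ?_
  linear_combination (2 * a) * hrel + (s₄ ^ 2 * a - b₄) * h₃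

theorem stmt_8_general (F : Type*) [Field F]
    (s₃ s₄ w₂ w₃ w₄ : F)
    (hd₃ : s₃ ^ 2 * (w₂ ^ 3 - 1) ≠ w₃ ^ 3 - 1)
    (hrel : (s₃ - s₄) * s₃ * s₄ * (w₂ ^ 3 - 1) - (s₃ - 1) * s₃ * (w₄ ^ 3 - 1) +
      (s₄ - 1) * s₄ * (w₃ ^ 3 - 1) = 0)
    (v₂ v₃ v₄ : F)
    (hv₂ : v₂ = 1 + 2 * (-s₃ * (w₂ ^ 3 - 1) + (w₃ ^ 3 - 1)) /
      (s₃ ^ 2 * (w₂ ^ 3 - 1) - (w₃ ^ 3 - 1)))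
    (hv₃ : v₃ = s₃ * (v₂ - 1) + 1) (hv₄ : v₄ = s₄ * (v₂ - 1) + 1) :
    (v₃ ^ 2 - 1) * (w₂ ^ 3 - 1) = (v₂ ^ 2 - 1) * (w₃ ^ 3 - 1) ∧
    (v₄ ^ 2 - 1) * (w₂ ^ 3 - 1) = (v₂ ^ 2 - 1) * (w₄ ^ 3 - 1) := by
  have hD : s₃ ^ 2 * (w₂ ^ 3 - 1) - (w₃ ^ 3 - 1) ≠ 0 := sub_ne_zero.mpr hd₃
  have h₃ : (v₂ - 1) * (s₃ ^ 2 * (w₂ ^ 3 - 1) - (w₃ ^ 3 - 1)) =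
      2 * ((w₃ ^ 3 - 1) - s₃ * (w₂ ^ 3 - 1)) := by
    rw [hv₂, add_sub_cancel_left, div_mul_cancel₀ _ hD]
    ring
  subst hv₃ hv₄
  exact ⟨sq_sub_one_mul_eq_of_linear h₃,
    sq_sub_one_mul_eq_of_linear (linear_of_linear_of_rel hD hrel h₃)⟩

/-- Let `F` be a field of characteristic different from 2, and let
`s₃, s₄, w₂, w₃, w₄ ∈ F` with `w₂³ ≠ 1`, `s₃²(w₂³ - 1) ≠ w₃³ - 1`, and
`s₄²(w₂³ - 1) ≠ w₄³ - 1`. Suppose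
`(s₃ - s₄) s₃ s₄ (w₂³ - 1) - (s₃ - 1) s₃ (w₄³ - 1) + (s₄ - 1) s₄ (w₃³ - 1) = 0`. Then
`v₂ := 1 + 2(-s₃(w₂³ - 1) + (w₃³ - 1)) / (s₃²(w₂³ - 1) - (w₃³ - 1))` satisfies, with
`vᵢ := sᵢ(v₂ - 1) + 1`, the equations `(vᵢ² - 1)(w₂³ - 1) = (v₂² - 1)(wᵢ³ - 1)` for both
`i = 3` and `i = 4`. -/
theorem stmt_8 (F : Type*) [Field F] (h2 : (2 : F) ≠ 0)
    (s₃ s₄ w₂ w₃ w₄ : F) (hw₂ : w₂ ^ 3 ≠ 1)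
    (hd₃ : s₃ ^ 2 * (w₂ ^ 3 - 1) ≠ w₃ ^ 3 - 1)
    (hd₄ : s₄ ^ 2 * (w₂ ^ 3 - 1) ≠ w₄ ^ 3 - 1)
    (hrel : (s₃ - s₄) * s₃ * s₄ * (w₂ ^ 3 - 1) - (s₃ - 1) * s₃ * (w₄ ^ 3 - 1) +
      (s₄ - 1) * s₄ * (w₃ ^ 3 - 1) = 0)
    (v₂ v₃ v₄ : F)
    (hv₂ : v₂ = 1 + 2 * (-s₃ * (w₂ ^ 3 - 1) + (w₃ ^ 3 - 1)) /
      (s₃ ^ 2 * (w₂ ^ 3 - 1) - (w₃ ^ 3 - 1)))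
    (hv₃ : v₃ = s₃ * (v₂ - 1) + 1) (hv₄ : v₄ = s₄ * (v₂ - 1) + 1) :
    (v₃ ^ 2 - 1) * (w₂ ^ 3 - 1) = (v₂ ^ 2 - 1) * (w₃ ^ 3 - 1) ∧
    (v₄ ^ 2 - 1) * (w₂ ^ 3 - 1) = (v₂ ^ 2 - 1) * (w₄ ^ 3 - 1) :=
  stmt_8_general F s₃ s₄ w₂ w₃ w₄ hd₃ hrel v₂ v₃ v₄ hv₂ hv₃ hv₄
end

section
/- Let F be a field of characteristic different from 2, and let s_3, s_4, s_5, v_2, w_2, w_3, w_4, w_5 ∈ F with v_2 ≠ 1 and w_2^3 ≠ 1. Define v_i := s_i(v_2 - 1) + 1 for i = 3, 4, 5, and suppose (v_i^2 - 1)(w_2^3 - 1) = (v_2^2 - 1)(w_i^3 - 1) for i = 3, 4, 5. Then both equations hold: (s_3 - s_4) s_3 s_4 (w_2^3 - 1) = (s_3 - 1) s_3 (w_4^3 - 1) - (s_4 - 1) s_4 (w_3^3 - 1), and (s_3 - s_5) s_3 s_5 (w_2^3 - 1) = (s_3 - 1) s_3 (w_5^3 - 1) - (s_5 - 1) s_5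 (w_3^3 - 1). -/
/-!
Write `vᵢ - 1 = sᵢ d` with `d = v₂ - 1`. Combining the hypotheses for `i` and `j` with weights
`(sᵢ - 1) sᵢ` and `(sⱼ - 1) sⱼ`, the claimed identity multiplied by `v₂² - 1` becomes a polynomial
identity, so it holds whenever `v₂² ≠ 1`. In the remaining case `v₂ = -1` the hypotheses read
`4 sᵢ (sᵢ - 1)(w₂³ - 1) = 0`, so every `sᵢ` is `0` or `1`, and both sides of the claim vanish.
-/

theorem mul_sub_one_eq_zero_of_sq_relation_neg_one {F : Type*} [Field F] (h2 : (2 : F) ≠ 0)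
    {a b s : F} (ha : a ≠ 0) (h : ((s * (-1 - 1) + 1) ^ 2 - 1) * a = ((-1) ^ 2 - 1) * b) :
    s * (s - 1) = 0 := by
  have h4 : (2 * 2 * a) * (s * (s - 1)) = 0 := by linear_combination h
  exact (mul_eq_zero.mp h4).resolve_left (mul_ne_zero (mul_ne_zero h2 h2) ha)

theorem cross_relation_of_sq_relations {F : Type*} [Field F] (h2 : (2 : F) ≠ 0) {s t v a b c : F}
    (hv : v ≠ 1) (ha : a ≠ 0)
    (hs : ((s * (v - 1) + 1) ^ 2 - 1) * a = (v ^ 2 - 1) * b)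
    (ht : ((t * (v - 1) + 1) ^ 2 - 1) * a = (v ^ 2 - 1) * c) :
    (s - t) * s * t * a = (s - 1) * s * c - (t - 1) * t * b := by
  by_cases hv' : v = -1
  · subst hv'
    have hs01 := mul_sub_one_eq_zero_of_sq_relation_neg_one h2 ha hs
    have ht01 := mul_sub_one_eq_zero_of_sq_relation_neg_one h2 ha ht
    linear_combination (t * a - c) * hs01 - (s * a - b) * ht01
  · have hv2 : v ^ 2 - 1 ≠ 0 := sub_ne_zero.mpr fun h => (sq_eq_one_iff.mp h).elim hv hv'
    apply mul_left_cancel₀ hv2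
    linear_combination (s - 1) * s * ht - (t - 1) * t * hs

/-- Let `F` be a field of characteristic different from 2, and let
`s₃, s₄, s₅, v₂, w₂, w₃, w₄, w₅ ∈ F` with `v₂ ≠ 1` and `w₂³ ≠ 1`. Define
`vᵢ := sᵢ(v₂ - 1) + 1` for `i = 3, 4, 5`, and suppose
`(vᵢ² - 1)(w₂³ - 1) = (v₂² - 1)(wᵢ³ - 1)` for `i = 3, 4, 5`. Then both equations hold:
`(s₃ - s₄) s₃ s₄ (w₂³ - 1) = (s₃ - 1) s₃ (w₄³ - 1) - (s₄ - 1) s₄ (w₃³ - 1)` and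
`(s₃ - s₅) s₃ s₅ (w₂³ - 1) = (s₃ - 1) s₃ (w₅³ - 1) - (s₅ - 1) s₅ (w₃³ - 1)`. -/
theorem stmt_9 (F : Type*) [Field F] (h2 : (2 : F) ≠ 0)
    (s₃ s₄ s₅ v₂ w₂ w₃ w₄ w₅ : F) (hv₂ : v₂ ≠ 1) (hw₂ : w₂ ^ 3 ≠ 1)
    (v₃ v₄ v₅ : F) (hv₃ : v₃ = s₃ * (v₂ - 1) + 1) (hv₄ : v₄ = s₄ * (v₂ - 1) + 1)
    (hv₅ : v₅ = s₅ * (v₂ - 1) + 1)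
    (h₃ : (v₃ ^ 2 - 1) * (w₂ ^ 3 - 1) = (v₂ ^ 2 - 1) * (w₃ ^ 3 - 1))
    (h₄ : (v₄ ^ 2 - 1) * (w₂ ^ 3 - 1) = (v₂ ^ 2 - 1) * (w₄ ^ 3 - 1))
    (h₅ : (v₅ ^ 2 - 1) * (w₂ ^ 3 - 1) = (v₂ ^ 2 - 1) * (w₅ ^ 3 - 1)) :
    (s₃ - s₄) * s₃ * s₄ * (w₂ ^ 3 - 1) =
      (s₃ - 1) * s₃ * (w₄ ^ 3 - 1) - (s₄ - 1) * s₄ * (w₃ ^ 3 - 1) ∧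
    (s₃ - s₅) * s₃ * s₅ * (w₂ ^ 3 - 1) =
      (s₃ - 1) * s₃ * (w₅ ^ 3 - 1) - (s₅ - 1) * s₅ * (w₃ ^ 3 - 1) := by
  subst hv₃ hv₄ hv₅
  have hw : w₂ ^ 3 - 1 ≠ 0 := sub_ne_zero.mpr hw₂
  exact ⟨cross_relation_of_sq_relations h2 hv₂ hw h₃ h₄, cross_relation_of_sq_relations h2 hv₂ hw h₃ h₅⟩
end

section
/- Let K be a field, let a_1, a_2, a_3, a_4 ∈ K be all nonzero, let (i, j, h, k) be a permutation of (1, 2, 3, 4), and let p = (p_1, p_2, p_3, p_4) ∈ K^4 satisfy p_i = 0, p_j = 0, p_h ≠ 0, p_k ≠ 0, and a_h p_h^3 + a_k p_k^3 = 0. Then for every y = (y_1, y_2, y_3, y_4) ∈ K^4 the following are equivalent: (1) a_1 y_1^3 + a_2 y_2^3 + a_3 y_3^3 + a_4 y_4^3 = 0 and a_h p_h^2 y_h + a_k p_k^2 y_k = 0; (2) p_k y_h = p_h y_k and a_i y_i^3 + a_j y_j^3 = 0. (That is, the intersection of the diagonal cubic surface with its tangent plane at the point p is the union of the three lines given by p_k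 y_h = p_h y_k and a_i y_i^3 + a_j y_j^3 = 0, so p is an Eckardt point.) -/
/-! Since `aₕpₕ³ = -aₖpₖ³`, multiplying the tangent equation by `pₖ` gives
`aₕpₕ²(pₖyₕ - pₕyₖ) = 0`, so on the tangent plane `(yₕ, yₖ)` is proportional to `(pₕ, pₖ)`.
On that line `aₕyₕ³ + aₖyₖ³` is a cube multiple of `aₕpₕ³ + aₖpₖ³ = 0`, so the cubic equation
reduces to `aᵢyᵢ³ + aⱼyⱼ³ = 0`. -/

section BinaryCubic

variable {K : Type*} [Field K] {ah ak ph pk yh yk : K}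

theorem tangent_eq_zero_iff_proportional (hah : ah ≠ 0) (hph : ph ≠ 0) (hpk : pk ≠ 0)
    (hp : ah * ph ^ 3 + ak * pk ^ 3 = 0) :
    ah * ph ^ 2 * yh + ak * pk ^ 2 * yk = 0 ↔ pk * yh = ph * yk := by
  have key : pk * (ah * ph ^ 2 * yh + ak * pk ^ 2 * yk) =
      ah * ph ^ 2 * (pk * yh - ph * yk) := by
    linear_combination yk * hp
  rw [← mul_right_inj' hpk, mul_zero, key, mul_eq_zero, sub_eq_zero]
  simp [hah, hph]

theorem cube_sum_eq_zero_of_proportional (hpk : pk ≠ 0)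
    (hp : ah * ph ^ 3 + ak * pk ^ 3 = 0) (hprop : pk * yh = ph * yk) :
    ah * yh ^ 3 + ak * yk ^ 3 = 0 := by
  have key : pk ^ 3 * (ah * yh ^ 3 + ak * yk ^ 3) = 0 := by
    linear_combination yk ^ 3 * hp +
      ah * (pk ^ 2 * yh ^ 2 + pk * yh * ph * yk + ph ^ 2 * yk ^ 2) * hprop
  simpa [hpk] using key

end BinaryCubic

theorem stmt_12_general (K : Type*) [Field K] (a : Fin 4 → K) (ha : ∀ m, a m ≠ 0)
    (e : Equiv.Perm (Fin 4)) (p : Fin 4 → K)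
    (hph : p (e 2) ≠ 0) (hpk : p (e 3) ≠ 0)
    (hp : a (e 2) * p (e 2) ^ 3 + a (e 3) * p (e 3) ^ 3 = 0)
    (y : Fin 4 → K) :
    ((∑ m : Fin 4, a m * y m ^ 3 = 0) ∧
      a (e 2) * p (e 2) ^ 2 * y (e 2) + a (e 3) * p (e 3) ^ 2 * y (e 3) = 0) ↔
    (p (e 3) * y (e 2) = p (e 2) * y (e 3) ∧
      a (e 0) * y (e 0) ^ 3 + a (e 1) * y (e 1) ^ 3 = 0) := by
  rw [← Equiv.sum_comp e (fun m => a m * y m ^ 3), Fin.sum_univ_four,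
    tangent_eq_zero_iff_proportional (ha (e 2)) hph hpk hp]
  constructor
  · rintro ⟨hsum, hprop⟩
    exact ⟨hprop, by linear_combination hsum - cube_sum_eq_zero_of_proportional hpk hp hprop⟩
  · rintro ⟨hprop, hij⟩
    exact ⟨by linear_combination hij + cube_sum_eq_zero_of_proportional hpk hp hprop, hprop⟩

/-- Let `K` be a field, let `a₁, a₂, a₃, a₄ ∈ K` be all nonzero, let
`(i, j, h, k)` be a permutation of `(1, 2, 3, 4)`, and let `p ∈ K⁴` satisfy `pᵢ = 0`,
`pⱼ = 0`, `pₕ ≠ 0`, `pₖ ≠ 0`, and `aₕpₕ³ + aₖpₖ³ = 0`. Then for every `y ∈ K⁴` the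
following are equivalent: (1) `a₁y₁³ + a₂y₂³ + a₃y₃³ + a₄y₄³ = 0` and
`aₕpₕ²yₕ + aₖpₖ²yₖ = 0`; (2) `pₖyₕ = pₕyₖ` and `aᵢyᵢ³ + aⱼyⱼ³ = 0`. (That is, the
intersection of the diagonal cubic surface with its tangent plane at `p` is the union of
the three lines given by `pₖyₕ = pₕyₖ` and `aᵢyᵢ³ + aⱼyⱼ³ = 0`, so `p` is an Eckardt
point.) -/
theorem stmt_12 (K : Type*) [Field K] (a : Fin 4 → K) (ha : ∀ m, a m ≠ 0)
    (e : Equiv.Perm (Fin 4)) (p : Fin 4 → K)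
    (hpi : p (e 0) = 0) (hpj : p (e 1) = 0) (hph : p (e 2) ≠ 0) (hpk : p (e 3) ≠ 0)
    (hp : a (e 2) * p (e 2) ^ 3 + a (e 3) * p (e 3) ^ 3 = 0)
    (y : Fin 4 → K) :
    ((∑ m : Fin 4, a m * y m ^ 3 = 0) ∧
      a (e 2) * p (e 2) ^ 2 * y (e 2) + a (e 3) * p (e 3) ^ 2 * y (e 3) = 0) ↔
    (p (e 3) * y (e 2) = p (e 2) * y (e 3) ∧
      a (e 0) * y (e 0) ^ 3 + a (e 1) * y (e 1) ^ 3 = 0) :=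
  stmt_12_general K a ha e p hph hpk hp y
end
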